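/- Let s be the Stieltjes transform of a symmetric probability distribution on ℝ satisfying 1 + z·s(z) − z·s(z)³ = 0 for all z in the upper half-plane, and let s_n be the Stieltjes transform of a probability distribution on ℝ satisfying 1 + z·s_n(z) − z·s_n(z)³ = δ_n(z), where additionally s_n arises as s_n(z) = (1/(2n)) E Tr (V − zI)⁻¹ for the 2n×2n Hermitian matrix V = H²J built from a matrix X with independent entries of mean 0, variance 1 and |X_{jk}| ≤ τ_n√n, so that E‖V‖₂² ≤ C·n. Then there exist positive constants C₀ and C₁ such that for all z = u + iv with v ≥ C₀, |s(z) − s_n(z)| ≤ C₁·|δ_n(z)|/v. -/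

import Mathlib

/-!
Both `s` and `s_n` are Stieltjes transforms of probability distributions (for `s_n`, an average
over the eigenvalues of the Hermitian matrix `V`), so both are bounded by `1 / v`. Subtracting the
two cubic equations gives `δ_n = z (s_n - s) (1 - (s² + s s_n + s_n²))`, and for `v ≥ 3` the last
factor has modulus at least `2 / 3`.
-/

open MeasureTheory ProbabilityTheory Matrix

/-- The normalized random matrix `X = n^{-1/2}(X_{jk})`. -/
noncomputable def normMat {Ω : Type*} (n : ℕ) (X : Fin n → Fin n → Ω → ℂ) (ω : Ω) :
    Matrix (Fin n) (Fin n) ℂ :=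
  (((Real.sqrt n)⁻¹ : ℝ) : ℂ) • Matrix.of fun j k => X j k ω

/-- The `2n × 2n` block-diagonal matrix `H = diag(X, X*)`. -/
noncomputable def blockH (n : ℕ) (X : Matrix (Fin n) (Fin n) ℂ) :
    Matrix (Fin n ⊕ Fin n) (Fin n ⊕ Fin n) ℂ :=
  Matrix.fromBlocks X 0 0 Xᴴ

/-- The `2n × 2n` matrix `J = [[0, I],[I, 0]]`. -/
def blockJ (n : ℕ) : Matrix (Fin n ⊕ Fin n) (Fin n ⊕ Fin n) ℂ :=
  Matrix.fromBlocks 0 1 1 0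

/-- The resolvent `R(z) = (H^m J − zI)⁻¹`. -/
noncomputable def resolventR (n m : ℕ) (X : Matrix (Fin n) (Fin n) ℂ) (z : ℂ) :
    Matrix (Fin n ⊕ Fin n) (Fin n ⊕ Fin n) ℂ :=
  ((blockH n X) ^ m * blockJ n - z • 1)⁻¹

theorem Complex.norm_inv_ofReal_sub_le (x : ℝ) {z : ℂ} (hz : 0 < z.im) :
    ‖((x : ℂ) - z)⁻¹‖ ≤ z.im⁻¹ := by
  rw [norm_inv]
  refine inv_anti₀ hz ?_
  simpa [abs_of_pos hz] using Complex.abs_im_le_norm ((x : ℂ) - z)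

theorem norm_integral_inv_ofReal_sub_le (ν : Measure ℝ) [IsProbabilityMeasure ν] {z : ℂ}
    (hz : 0 < z.im) : ‖∫ x, ((x : ℂ) - z)⁻¹ ∂ν‖ ≤ z.im⁻¹ := by
  simpa using norm_integral_le_of_norm_le_const (μ := ν)
    (Filter.Eventually.of_forall fun x => Complex.norm_inv_ofReal_sub_le x hz)

theorem Matrix.IsHermitian.trace_inv_sub_smul_one {𝕜 N : Type*} [RCLike 𝕜] [Fintype N]
    [DecidableEq N] {A : Matrix N N 𝕜} (hA : A.IsHermitian) {z : 𝕜}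
    (hz : ∀ i, (hA.eigenvalues i : 𝕜) ≠ z) :
    (A - z • 1)⁻¹.trace = ∑ i, ((hA.eigenvalues i : 𝕜) - z)⁻¹ := by
  set U : Matrix N N 𝕜 := ↑hA.eigenvectorUnitary
  have hUU : star U * U = 1 := Unitary.coe_star_mul_self _
  have hUU' : U * star U = 1 := Unitary.coe_mul_star_self _
  have hdiag : A - z • 1 = U * diagonal (fun i => (hA.eigenvalues i : 𝕜) - z) * star U := by
    have : diagonal (fun i => (hA.eigenvalues i : 𝕜) - z) =
        diagonal (RCLike.ofReal ∘ hA.eigenvalues) - z • 1 := by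
      rw [smul_one_eq_diagonal, diagonal_sub]; rfl
    conv_lhs => rw [hA.spectral_theorem, Unitary.conjStarAlgAut_apply]
    rw [this, Matrix.mul_sub, Matrix.sub_mul, mul_smul_comm, Matrix.mul_one, smul_mul_assoc, hUU']
  have hinv : (A - z • 1)⁻¹ =
      U * diagonal (fun i => ((hA.eigenvalues i : 𝕜) - z)⁻¹) * star U := by
    refine inv_eq_right_inv ?_
    rw [hdiag]
    simp only [Matrix.mul_assoc]
    rw [← Matrix.mul_assoc (star U) U, hUU, Matrix.one_mul, ← Matrix.mul_assoc (diagonal _),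
      diagonal_mul_diagonal]
    simp [sub_ne_zero.mpr (hz _), hUU']
  rw [hinv, trace_mul_cycle, hUU, Matrix.one_mul, trace_diagonal]

theorem Matrix.IsHermitian.norm_trace_inv_sub_smul_one_le {N : Type*} [Fintype N]
    [DecidableEq N] {A : Matrix N N ℂ} (hA : A.IsHermitian) {z : ℂ} (hz : 0 < z.im) :
    ‖(A - z • 1)⁻¹.trace‖ ≤ Fintype.card N * z.im⁻¹ := by
  have hne : ∀ i, (hA.eigenvalues i : ℂ) ≠ z := fun i h => by
    simp [← h] at hz
  rw [hA.trace_inv_sub_smul_one hne]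
  calc ‖∑ i, ((hA.eigenvalues i : ℂ) - z)⁻¹‖
      ≤ ∑ i, ‖((hA.eigenvalues i : ℂ) - z)⁻¹‖ := norm_sum_le _ _
    _ ≤ ∑ _i : N, z.im⁻¹ := Finset.sum_le_sum fun i _ => Complex.norm_inv_ofReal_sub_le _ hz
    _ = Fintype.card N * z.im⁻¹ := by simp

theorem norm_inv_card_mul_integral_trace_inv_sub_smul_one_le {N Ω : Type*} [Fintype N]
    [DecidableEq N] [MeasurableSpace Ω] (μ : Measure Ω) [IsProbabilityMeasure μ]
    (A : Ω → Matrix N N ℂ) (hA : ∀ ω, (A ω).IsHermitian) {z : ℂ} (hz : 0 < z.im) :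
    ‖(Fintype.card N : ℂ)⁻¹ * ∫ ω, (A ω - z • 1)⁻¹.trace ∂μ‖ ≤ z.im⁻¹ := by
  have hint : ‖∫ ω, (A ω - z • 1)⁻¹.trace ∂μ‖ ≤ Fintype.card N * z.im⁻¹ := by
    simpa using norm_integral_le_of_norm_le_const (μ := μ)
      (Filter.Eventually.of_forall fun ω => (hA ω).norm_trace_inv_sub_smul_one_le hz)
  rw [norm_mul, norm_inv, Complex.norm_natCast]
  rcases eq_or_ne (Fintype.card N : ℝ) 0 with hN | hN
  · simp [hN, hz.le]
  · calc (Fintype.card N : ℝ)⁻¹ * ‖∫ ω, (A ω - z • 1)⁻¹.trace ∂μ‖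
        ≤ (Fintype.card N : ℝ)⁻¹ * (Fintype.card N * z.im⁻¹) := by gcongr
      _ = z.im⁻¹ := inv_mul_cancel_left₀ hN _

theorem isHermitian_blockH_sq_mul_blockJ (n : ℕ) (X : Matrix (Fin n) (Fin n) ℂ) :
    ((blockH n X) ^ 2 * blockJ n).IsHermitian := by
  simp [IsHermitian, blockH, blockJ, pow_two, fromBlocks_multiply, fromBlocks_conjTranspose,
    conjTranspose_mul]

theorem norm_sub_le_of_norm_le_inv_three {𝕜 : Type*} [NormedField 𝕜] {a b : 𝕜}
    (ha : ‖a‖ ≤ 3⁻¹) (hb : ‖b‖ ≤ 3⁻¹) :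
    ‖a - b‖ ≤ 3 / 2 * ‖(a - a ^ 3) - (b - b ^ 3)‖ := by
  have hq : ‖a ^ 2 + a * b + b ^ 2‖ ≤ 3⁻¹ := by
    calc ‖a ^ 2 + a * b + b ^ 2‖ ≤ ‖a‖ ^ 2 + ‖a‖ * ‖b‖ + ‖b‖ ^ 2 := by
          refine norm_add₃_le.trans_eq ?_
          rw [norm_pow, norm_mul, norm_pow]
      _ ≤ 3⁻¹ := by nlinarith [norm_nonneg a, norm_nonneg b]
  have hfactor : 2 / 3 ≤ ‖1 - (a ^ 2 + a * b + b ^ 2)‖ := by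
    have := norm_sub_norm_le (1 : 𝕜) (a ^ 2 + a * b + b ^ 2)
    rw [norm_one] at this
    linarith
  have hcubic : (a - a ^ 3) - (b - b ^ 3) = (a - b) * (1 - (a ^ 2 + a * b + b ^ 2)) := by ring
  rw [hcubic, norm_mul]
  nlinarith [norm_nonneg (a - b)]

theorem stieltjes_equation_stability_general
    (n : ℕ)
    {Ω : Type*} [MeasurableSpace Ω] (μ : Measure Ω) [IsProbabilityMeasure μ]
    (X : Fin n → Fin n → Ω → ℂ)
    (ν : Measure ℝ) (hνp : IsProbabilityMeasure ν)
    (s : ℂ → ℂ) (hs : ∀ z : ℂ, s z = ∫ x, ((x : ℂ) - z)⁻¹ ∂ν)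
    (hseq : ∀ z : ℂ, 0 < z.im → 1 + z * s z - z * (s z) ^ 3 = 0)
    (sn δ : ℂ → ℂ)
    (hsn : ∀ z : ℂ, sn z =
      (1 / (2 * n : ℂ)) * ∫ ω, (resolventR n 2 (normMat n X ω) z).trace ∂μ)
    (hδ : ∀ z : ℂ, 0 < z.im → 1 + z * sn z - z * (sn z) ^ 3 = δ z) :
    ∃ C₀ > 0, ∃ C₁ > 0, ∀ z : ℂ, C₀ ≤ z.im →
      ‖s z - sn z‖ ≤ C₁ * ‖δ z‖ / z.im := by
  refine ⟨3, by norm_num, 3 / 2, by norm_num, fun z hz3 => ?_⟩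
  have hz : 0 < z.im := by linarith
  have hv : z.im⁻¹ ≤ 3⁻¹ := inv_anti₀ (by norm_num) hz3
  have hs_le : ‖s z‖ ≤ 3⁻¹ := by
    rw [hs]
    exact (norm_integral_inv_ofReal_sub_le ν hz).trans hv
  have hsn_le : ‖sn z‖ ≤ 3⁻¹ := by
    have hcard : (1 / (2 * n : ℂ)) = (Fintype.card (Fin n ⊕ Fin n) : ℂ)⁻¹ := by
      simp [two_mul]
    rw [hsn, hcard]
    exact (norm_inv_card_mul_integral_trace_inv_sub_smul_one_le μ _
      (fun ω => isHermitian_blockH_sq_mul_blockJ n (normMat n X ω)) hz).trans hv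
  have hδz : δ z = -z * ((s z - s z ^ 3) - (sn z - sn z ^ 3)) := by
    linear_combination hseq z hz - hδ z hz
  have hstab := norm_sub_le_of_norm_le_inv_three hs_le hsn_le
  rw [le_div_iff₀ hz, hδz, norm_mul, norm_neg]
  calc ‖s z - sn z‖ * z.im ≤ 3 / 2 * ‖(s z - s z ^ 3) - (sn z - sn z ^ 3)‖ * ‖z‖ :=
        mul_le_mul hstab (Complex.im_le_norm z) hz.le (by positivity)
    _ = 3 / 2 * (‖z‖ * ‖(s z - s z ^ 3) - (sn z - sn z ^ 3)‖) := by ring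

/-- **Stability of the cubic equation for Stieltjes transforms (case `m = 2`).** If `s` is the
Stieltjes transform of a symmetric probability distribution with `1 + z·s(z) − z·s(z)³ = 0`,
and `s_n(z) = (1/(2n)) E Tr (V − zI)⁻¹` (for `V = H²J` built from a matrix with independent
centred entries of unit variance, bounded by `τ√n`, with `E‖V‖₂² ≤ C_V·n`) satisfies
`1 + z·s_n(z) − z·s_n(z)³ = δ_n(z)`, then there are `C₀, C₁ > 0` such that
`|s(z) − s_n(z)| ≤ C₁·|δ_n(z)|/v` for all `z = u + iv` with `v ≥ C₀`. -/
theorem stieltjes_equation_stability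
    (n : ℕ) (τ CV : ℝ) (hτ : 0 < τ)
    {Ω : Type*} [MeasurableSpace Ω] (μ : Measure Ω) [IsProbabilityMeasure μ]
    (X : Fin n → Fin n → Ω → ℂ)
    (hmeas : ∀ j k, Measurable (X j k))
    (hindep : iIndepFun
      (fun p : Fin n × Fin n => X p.1 p.2) μ)
    (hmean : ∀ j k, ∫ ω, X j k ω ∂μ = 0)
    (hvar : ∀ j k, ∫ ω, ‖X j k ω‖ ^ 2 ∂μ = 1)
    (hbdd : ∀ j k, ∀ᵐ ω ∂μ, ‖X j k ω‖ ≤ τ * Real.sqrt n)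
    (hV : ∫ ω, ∑ p : Fin n ⊕ Fin n, ∑ q : Fin n ⊕ Fin n,
        ‖((blockH n (normMat n X ω)) ^ 2 * blockJ n) p q‖ ^ 2 ∂μ ≤ CV * n)
    (ν : Measure ℝ) (hνp : IsProbabilityMeasure ν)
    (hνsymm : Measure.map (fun x : ℝ => -x) ν = ν)
    (s : ℂ → ℂ) (hs : ∀ z : ℂ, s z = ∫ x, ((x : ℂ) - z)⁻¹ ∂ν)
    (hseq : ∀ z : ℂ, 0 < z.im → 1 + z * s z - z * (s z) ^ 3 = 0)
    (sn δ : ℂ → ℂ)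
    (hsn : ∀ z : ℂ, sn z =
      (1 / (2 * n : ℂ)) * ∫ ω, (resolventR n 2 (normMat n X ω) z).trace ∂μ)
    (hδ : ∀ z : ℂ, 0 < z.im → 1 + z * sn z - z * (sn z) ^ 3 = δ z) :
    ∃ C₀ > 0, ∃ C₁ > 0, ∀ z : ℂ, C₀ ≤ z.im →
      ‖s z - sn z‖ ≤ C₁ * ‖δ z‖ / z.im :=
  stieltjes_equation_stability_general n μ X ν hνp s hs hseq sn δ hsn hδ
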